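/- (Necessity of the restricted three-weight condition.) Let u, v, w be weights with u⁻¹w² and v locally integrable, and suppose the weighted dyadic square function S_w is bounded from L²(u) to L²(v) with norm ‖S_w‖. Then for every dyadic interval J, (w(J*)/w(J̃))² · ⟨u⁻¹w²⟩_J ⟨v⟩_J / ⟨w⟩_J² ≤ ‖S_w‖², where J* and J̃ are the sibling and parent of J. In particular (uw⁻¹, vw⁻¹) ∈ Ã₂^d(w). -/

import Mathlib

open MeasureTheory Set Real ENNReal

/-- The dyadic interval `[k·2^{-j}, (k+1)·2^{-j})`. -/
noncomputable def dI (k j : ℤ) : Set ℝ :=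
  Set.Ico ((k : ℝ) * (2 : ℝ) ^ (-j)) (((k : ℝ) + 1) * (2 : ℝ) ^ (-j))

/-- Index of the dyadic sibling of `dI k j`. -/
def sib (k : ℤ) : ℤ := if k % 2 = 0 then k + 1 else k - 1

/-- The dyadic parent of `dI k j`. -/
noncomputable def dpar (k j : ℤ) : Set ℝ := dI (Int.fdiv k 2) (j - 1)

/-- The `w`-weighted average of `g` over the set `S`. -/
noncomputable def wavg (w g : ℝ → ℝ) (S : Set ℝ) : ℝ :=
  (∫ x in S, g x * w x) / (∫ x in S, w x)

/-- The square of the weighted dyadic square function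
`S_w f(x)² = ∑_{I dyadic} |⟨f⟩_I^w − ⟨f⟩_{Ĩ}^w|² 1_I(x)`, valued in `[0,∞]`. -/
noncomputable def SwSq (w f : ℝ → ℝ) (x : ℝ) : ℝ≥0∞ :=
  ∑' p : ℤ × ℤ,
    Set.indicator (dI p.1 p.2)
      (fun _ => ENNReal.ofReal ((wavg w f (dI p.1 p.2) - wavg w f (dpar p.1 p.2)) ^ 2)) x

/-!
Test the bound on `f = u⁻¹ w 1_J`. Its `L²(u)` norm squared is `B = ∫_J u⁻¹ w²`, and its
`w`-averages over `J` and over the parent `J̃` are `B / w(J)` and `B / w(J̃)`. As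
`w(J̃) = w(J) + w(J*)`, the single term `I = J` of the square function gives
`S_w f ≥ B w(J*) / (w(J) w(J̃))` on `J`; integrating its square against `v` over `J` and
dividing by `B` yields the inequality.
-/

lemma dI_two_mul_union (m j : ℤ) : dI (2 * m) j ∪ dI (2 * m + 1) j = dI m (j - 1) := by
  have ht : (0 : ℝ) < 2 ^ (-j) := by positivity
  have hpow : (2 : ℝ) ^ (-(j - 1)) = 2 * 2 ^ (-j) := by
    rw [neg_sub, sub_eq_add_neg, zpow_add₀ two_ne_zero, zpow_one]
  simp only [dI, hpow]
  push_cast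
  rw [Ico_union_Ico_eq_Ico (by nlinarith) (by nlinarith)]
  congr 1 <;> ring

lemma disjoint_dI_two_mul (m j : ℤ) : Disjoint (dI (2 * m) j) (dI (2 * m + 1) j) := by
  simp only [dI]
  push_cast
  exact Ico_disjoint_Ico_same

lemma sib_two_mul (m : ℤ) : sib (2 * m) = 2 * m + 1 := by simp [sib]

lemma sib_two_mul_add_one (m : ℤ) : sib (2 * m + 1) = 2 * m := by
  simp [sib, Int.add_emod]

lemma dpar_two_mul (m j : ℤ) : dpar (2 * m) j = dI m (j - 1) := by
  rw [dpar, Int.fdiv_eq_ediv_of_nonneg _ zero_le_two]; congr; omega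

lemma dpar_two_mul_add_one (m j : ℤ) : dpar (2 * m + 1) j = dI m (j - 1) := by
  rw [dpar, Int.fdiv_eq_ediv_of_nonneg _ zero_le_two]; congr; omega

lemma dpar_eq_union (k j : ℤ) : dpar k j = dI k j ∪ dI (sib k) j := by
  obtain ⟨m, rfl | rfl⟩ := Int.even_or_odd' k
  · rw [sib_two_mul, dpar_two_mul, dI_two_mul_union]
  · rw [sib_two_mul_add_one, dpar_two_mul_add_one, union_comm, dI_two_mul_union]

lemma disjoint_dI_sib (k j : ℤ) : Disjoint (dI k j) (dI (sib k) j) := by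
  obtain ⟨m, rfl | rfl⟩ := Int.even_or_odd' k
  · rw [sib_two_mul]; exact disjoint_dI_two_mul m j
  · rw [sib_two_mul_add_one]; exact (disjoint_dI_two_mul m j).symm

lemma measurableSet_dI (k j : ℤ) : MeasurableSet (dI k j) := measurableSet_Ico

lemma dI_subset_dpar (k j : ℤ) : dI k j ⊆ dpar k j := dpar_eq_union k j ▸ subset_union_left

lemma setIntegral_dpar {g : ℝ → ℝ} {k j : ℤ} (hk : IntegrableOn g (dI k j))
    (hsib : IntegrableOn g (dI (sib k) j)) :
    ∫ x in dpar k j, g x = (∫ x in dI k j, g x) + ∫ x in dI (sib k) j, g x := by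
  rw [dpar_eq_union]
  exact setIntegral_union (disjoint_dI_sib k j) (measurableSet_dI _ _) hk hsib

lemma ofReal_sq_jump_le_SwSq (w f : ℝ → ℝ) {k j : ℤ} {x : ℝ} (hx : x ∈ dI k j) :
    ENNReal.ofReal ((wavg w f (dI k j) - wavg w f (dpar k j)) ^ 2) ≤ SwSq w f x :=
  calc _ = (dI k j).indicator
          (fun _ => ENNReal.ofReal ((wavg w f (dI k j) - wavg w f (dpar k j)) ^ 2)) x :=
        (indicator_of_mem hx _).symm
    _ ≤ SwSq w f x := ENNReal.le_tsum (k, j)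

lemma ofReal_integral_le_lintegral_ofReal {α : Type*} [MeasurableSpace α] {μ : Measure α}
    (f : α → ℝ) : ENNReal.ofReal (∫ x, f x ∂μ) ≤ ∫⁻ x, ENNReal.ofReal (f x) ∂μ := by
  by_cases hf : Integrable f μ
  · rw [integral_eq_lintegral_pos_part_sub_lintegral_neg_part hf]
    exact (ENNReal.ofReal_le_ofReal (sub_le_self _ ENNReal.toReal_nonneg)).trans
      ENNReal.ofReal_toReal_le
  · simp [integral_undef hf]

lemma ofReal_sq_jump_mul_setIntegral_le_lintegral_SwSq (w f v : ℝ → ℝ) (k j : ℤ) :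
    ENNReal.ofReal ((wavg w f (dI k j) - wavg w f (dpar k j)) ^ 2 * ∫ x in dI k j, v x) ≤
      ∫⁻ x, SwSq w f x * ENNReal.ofReal (v x) := by
  set a := ENNReal.ofReal ((wavg w f (dI k j) - wavg w f (dpar k j)) ^ 2)
  calc _ ≤ a * ∫⁻ x in dI k j, ENNReal.ofReal (v x) := by
        rw [ENNReal.ofReal_mul (sq_nonneg _)]
        gcongr
        exact ofReal_integral_le_lintegral_ofReal v
    _ = ∫⁻ x in dI k j, a * ENNReal.ofReal (v x) :=
        (lintegral_const_mul' _ _ ENNReal.ofReal_ne_top).symm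
    _ ≤ ∫⁻ x in dI k j, SwSq w f x * ENNReal.ofReal (v x) :=
        setLIntegral_mono' (measurableSet_dI k j) fun x hx => by
          gcongr
          exact ofReal_sq_jump_le_SwSq w f hx
    _ ≤ ∫⁻ x, SwSq w f x * ENNReal.ofReal (v x) := setLIntegral_le_lintegral _ _

noncomputable def testFn (u w : ℝ → ℝ) (J : Set ℝ) : ℝ → ℝ := J.indicator fun x => (u x)⁻¹ * w x

lemma testFn_mul (u w : ℝ → ℝ) (J : Set ℝ) (x : ℝ) :
    testFn u w J x * w x = J.indicator (fun x => (u x)⁻¹ * w x ^ 2) x := by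
  by_cases hx : x ∈ J <;> simp [testFn, hx, sq, mul_assoc]

lemma testFn_sq_mul (u w : ℝ → ℝ) (J : Set ℝ) (x : ℝ) :
    testFn u w J x ^ 2 * u x = J.indicator (fun x => (u x)⁻¹ * w x ^ 2) x := by
  by_cases hx : x ∈ J
  · -- also where `u x = 0`, as then both sides vanish by `0⁻¹ = 0`
    rcases eq_or_ne (u x) 0 with hu | hu
    · simp [testFn, hx, hu]
    · simp only [testFn, indicator_of_mem hx]
      field_simp
  · simp [testFn, hx]

lemma wavg_testFn (u w : ℝ → ℝ) {J S : Set ℝ} (hJ : MeasurableSet J) (hJS : J ⊆ S) :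
    wavg w (testFn u w J) S = (∫ x in J, (u x)⁻¹ * w x ^ 2) / ∫ x in S, w x := by
  simp only [wavg, testFn_mul, setIntegral_indicator hJ, inter_eq_right.mpr hJS]

lemma lintegral_testFn_sq_mul {u w : ℝ → ℝ} {J : Set ℝ} (hJ : MeasurableSet J)
    (hu : ∀ᵐ x ∂volume.restrict J, 0 ≤ u x)
    (hint : IntegrableOn (fun x => (u x)⁻¹ * w x ^ 2) J) :
    ∫⁻ x, ENNReal.ofReal (testFn u w J x ^ 2 * u x) =
      ENNReal.ofReal (∫ x in J, (u x)⁻¹ * w x ^ 2) := by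
  have hcomp (x : ℝ) : ENNReal.ofReal (testFn u w J x ^ 2 * u x) =
      J.indicator (fun x => ENNReal.ofReal ((u x)⁻¹ * w x ^ 2)) x := by
    rw [testFn_sq_mul]
    by_cases hx : x ∈ J <;> simp [hx]
  rw [lintegral_congr hcomp, lintegral_indicator hJ, ofReal_integral_eq_lintegral_ofReal hint
      (hu.mono fun x hx => by positivity)]

lemma sibling_ratio_le_of_jump_le {a b p B c M : ℝ} (ha : 0 < a) (hp : 0 < p) (hab : p = a + b)
    (hB : 0 ≤ B) (hM : 0 ≤ M) (h : (B / a - B / p) ^ 2 * c ≤ M * B) :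
    (b / p) ^ 2 * (B * c) / a ^ 2 ≤ M := by
  rcases hB.eq_or_lt with rfl | hB
  · simpa using hM
  have hjump : (b / p) ^ 2 * (B * c) / a ^ 2 * B = (B / a - B / p) ^ 2 * c := by
    subst hab
    field_simp
    ring
  exact le_of_mul_le_mul_right (hjump ▸ h) hB

theorem restricted_condition_necessary_general (u v w : ℝ → ℝ) (N : ℝ)
    (hu : ∀ᵐ x ∂(volume : Measure ℝ), 0 < u x)
    (h1 : ∀ k j : ℤ, IntegrableOn (fun x => (u x)⁻¹ * (w x) ^ 2) (dI k j))
    (h3 : ∀ k j : ℤ, IntegrableOn w (dI k j))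
    (h4 : ∀ k j : ℤ, 0 < ∫ x in dI k j, w x)
    (hbound : ∀ f : ℝ → ℝ,
      (∫⁻ x, SwSq w f x * ENNReal.ofReal (v x)) ≤
        ENNReal.ofReal (N ^ 2) * ∫⁻ x, ENNReal.ofReal ((f x) ^ 2 * u x)) :
    ∀ k j : ℤ,
      ((∫ x in dI (sib k) j, w x) / (∫ x in dpar k j, w x)) ^ 2 *
          ((∫ x in dI k j, (u x)⁻¹ * (w x) ^ 2) * (∫ x in dI k j, v x)) /
          (∫ x in dI k j, w x) ^ 2 ≤ N ^ 2 := by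
  intro k j
  have huJ : ∀ᵐ x ∂volume.restrict (dI k j), 0 ≤ u x :=
    ae_restrict_of_ae (hu.mono fun _ => le_of_lt)
  have hB : 0 ≤ ∫ x in dI k j, (u x)⁻¹ * w x ^ 2 :=
    setIntegral_nonneg_of_ae_restrict (huJ.mono fun x hx => by positivity)
  set f := testFn u w (dI k j)
  have hjump : (wavg w f (dI k j) - wavg w f (dpar k j)) ^ 2 * (∫ x in dI k j, v x) ≤
      N ^ 2 * ∫ x in dI k j, (u x)⁻¹ * w x ^ 2 := by
    have := (ofReal_sq_jump_mul_setIntegral_le_lintegral_SwSq w f v k j).trans (hbound f)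
    rw [lintegral_testFn_sq_mul (measurableSet_dI k j) huJ (h1 k j),
      ← ENNReal.ofReal_mul (sq_nonneg N)] at this
    exact (ENNReal.ofReal_le_ofReal_iff (by positivity)).1 this
  rw [wavg_testFn u w (measurableSet_dI k j) subset_rfl,
    wavg_testFn u w (measurableSet_dI k j) (dI_subset_dpar k j)] at hjump
  exact sibling_ratio_le_of_jump_le (h4 k j) (h4 (Int.fdiv k 2) (j - 1))
    (setIntegral_dpar (h3 k j) (h3 (sib k) j)) hB (sq_nonneg N) hjump

/-- Necessity of the restricted three-weight condition: if `S_w` is bounded from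
`L²(u)` to `L²(v)` with norm `N`, then for every dyadic interval `J`,
`(w(J*)/w(J̃))² ⟨u⁻¹w²⟩_J ⟨v⟩_J / ⟨w⟩_J² ≤ N²`; i.e. `(uw⁻¹, vw⁻¹) ∈ Ã₂^d(w)`. -/
theorem restricted_condition_necessary (u v w : ℝ → ℝ) (N : ℝ) (hN : 0 ≤ N)
    (hu : ∀ᵐ x ∂(volume : Measure ℝ), 0 < u x)
    (hv : ∀ᵐ x ∂(volume : Measure ℝ), 0 < v x)
    (hw : ∀ᵐ x ∂(volume : Measure ℝ), 0 < w x)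
    (h1 : ∀ k j : ℤ, IntegrableOn (fun x => (u x)⁻¹ * (w x) ^ 2) (dI k j))
    (h2 : ∀ k j : ℤ, IntegrableOn v (dI k j))
    (h3 : ∀ k j : ℤ, IntegrableOn w (dI k j))
    (h4 : ∀ k j : ℤ, 0 < ∫ x in dI k j, w x)
    (hbound : ∀ f : ℝ → ℝ,
      (∫⁻ x, SwSq w f x * ENNReal.ofReal (v x)) ≤
        ENNReal.ofReal (N ^ 2) * ∫⁻ x, ENNReal.ofReal ((f x) ^ 2 * u x)) :
    ∀ k j : ℤ,
      ((∫ x in dI (sib k) j, w x) / (∫ x in dpar k j, w x)) ^ 2 *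
          ((∫ x in dI k j, (u x)⁻¹ * (w x) ^ 2) * (∫ x in dI k j, v x)) /
          (∫ x in dI k j, w x) ^ 2 ≤ N ^ 2 :=
  restricted_condition_necessary_general u v w N hu h1 h3 h4 hbound
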